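/- arXiv:2312.01695 — 2 statements merged into one kernel-verified Lean document; each statement's English description precedes it below -/
import Mathlib

section
/- Let d ≥ 2, let ω ∈ ℝ^d be nonzero and let k ∈ ℤ^d be a nonzero integer vector satisfying |⟨ω, k⟩| ≤ C/|k|^{d-1+τ} for some C > 0, τ ≥ 0, with |k| sufficiently large. Then there exists an integer vector k' ∈ ℤ^d such that ⟨k, k'⟩ = 0, |k'| is comparable to |k| (i.e. c₁|k| ≤ |k'| ≤ c₂|k|), and |⟨k', ω⟩| is comparable to |k|, where the constants c₁, c₂ depend only on d and ω. -/
open Finset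

private lemma sum_ite_two' {R : Type*} [CommRing R] {d : ℕ} {i j : Fin d} (hij : i ≠ j)
    (f : Fin d → R) (A B : R) :
    ∑ l, f l * (if l = i then A else if l = j then B else 0) = f i * A + f j * B := by
  have h : ∀ l, f l * (if l = i then A else if l = j then B else 0) =
      (if l = i then f i * A else 0) + (if l = j then f j * B else 0) := by
    intro l
    by_cases h1 : l = i
    · subst h1; simp [hij]
    · by_cases h2 : l = j
      · subst h2; simp [h1, Ne.symm hij]
      · simp [h1, h2]
  simp_rw [h, Finset.sum_add_distrib, Finset.sum_ite_eq' Finset.univ,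
    Finset.mem_univ, if_true]

set_option maxHeartbeats 1000000 in
/-- Key arithmetic lemma: given a resonance `k` with `|⟨ω,k⟩| ≤ C/|k|^{d-1+τ}` and `|k|`
large, there is `k' ⊥ k` with `|k'| ∼ |k|` and `|⟨k',ω⟩| ∼ |k|`, constants depending
only on `d` and `ω`. -/
theorem orthogonal_companion_vector (d : ℕ) (hd : 2 ≤ d) (ω : Fin d → ℝ) (hω : ω ≠ 0) :
    ∃ c₁ : ℝ, 0 < c₁ ∧ ∃ c₂ : ℝ, 0 < c₂ ∧ ∃ c₃ : ℝ, 0 < c₃ ∧ ∃ c₄ : ℝ, 0 < c₄ ∧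
      ∀ C : ℝ, 0 < C → ∀ τ : ℝ, 0 ≤ τ →
        ∃ K₀ : ℝ, ∀ k : Fin d → ℤ, k ≠ 0 →
          K₀ ≤ Real.sqrt (∑ i, ((k i : ℝ)) ^ 2) →
          |∑ i, ω i * (k i : ℝ)| ≤
            C / (Real.sqrt (∑ i, ((k i : ℝ)) ^ 2)) ^ ((d : ℝ) - 1 + τ) →
          ∃ k' : Fin d → ℤ,
            (∑ i, k i * k' i) = 0 ∧
            c₁ * Real.sqrt (∑ i, ((k i : ℝ)) ^ 2) ≤ Real.sqrt (∑ i, ((k' i : ℝ)) ^ 2) ∧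
            Real.sqrt (∑ i, ((k' i : ℝ)) ^ 2) ≤ c₂ * Real.sqrt (∑ i, ((k i : ℝ)) ^ 2) ∧
            c₃ * Real.sqrt (∑ i, ((k i : ℝ)) ^ 2) ≤ |∑ i, ω i * (k' i : ℝ)| ∧
            |∑ i, ω i * (k' i : ℝ)| ≤ c₄ * Real.sqrt (∑ i, ((k i : ℝ)) ^ 2) := by
  have hd2 : (2:ℝ) ≤ d := by exact_mod_cast hd
  have hd0 : (0:ℝ) < d := by linarith
  have hsd : (0:ℝ) < Real.sqrt d := Real.sqrt_pos.mpr hd0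
  have hsd1 : (1:ℝ) ≤ Real.sqrt d := by
    rw [show (1:ℝ) = Real.sqrt 1 by simp]
    exact Real.sqrt_le_sqrt (by linarith)
  set W : ℝ := Real.sqrt (∑ i, ω i ^ 2) with hWdef
  have hW2 : ∑ i, ω i ^ 2 = W ^ 2 := (Real.sq_sqrt (by positivity)).symm
  have hWpos : 0 < W := by
    obtain ⟨i, hi⟩ := Function.ne_iff.mp hω
    apply Real.sqrt_pos.mpr
    apply Finset.sum_pos' (fun l _ => sq_nonneg _)
    exact ⟨i, Finset.mem_univ i, (sq_nonneg _).lt_of_ne' (pow_ne_zero 2 hi)⟩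
  -- generic fact: a component is at most the euclidean norm
  have habs : ∀ (f : Fin d → ℝ) (l : Fin d), |f l| ≤ Real.sqrt (∑ m, f m ^ 2) := by
    intro f l
    rw [← Real.sqrt_sq_eq_abs]
    exact Real.sqrt_le_sqrt (Finset.single_le_sum (f := fun m => f m ^ 2)
      (fun m _ => sq_nonneg (f m)) (Finset.mem_univ l))
  refine ⟨(Real.sqrt d)⁻¹, by positivity, 2, by norm_num, W / (2 * d), by positivity,
    2 * W, by positivity, ?_⟩
  intro C hC τ hτ
  refine ⟨Real.sqrt d * (2 * C / W + 1) + 1, ?_⟩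
  intro k hk0 hK hres
  set N : ℝ := Real.sqrt (∑ i, ((k i : ℝ)) ^ 2) with hNdef
  have hNnonneg : 0 ≤ N := Real.sqrt_nonneg _
  have hN1 : 1 ≤ N := by
    have h1 : 0 ≤ Real.sqrt d * (2 * C / W + 1) := by positivity
    linarith
  have hNpos : 0 < N := by linarith
  -- choose j maximizing |k j|
  obtain ⟨j, -, hjmax⟩ := Finset.exists_max_image Finset.univ
    (fun l => |((k l : ℝ))|) ⟨⟨0, by omega⟩, Finset.mem_univ _⟩
  have hjmax' : ∀ l : Fin d, |((k l : ℝ))| ≤ |((k j : ℝ))| := fun l => hjmax l (Finset.mem_univ l)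
  have hjN : |((k j : ℝ))| ≤ N := habs (fun l => (k l : ℝ)) j
  have hNj : N ≤ Real.sqrt d * |((k j : ℝ))| := by
    have hsum : ∑ l, ((k l : ℝ)) ^ 2 ≤ (d : ℝ) * ((k j : ℝ)) ^ 2 := by
      calc ∑ l, ((k l : ℝ)) ^ 2 ≤ ∑ _l : Fin d, ((k j : ℝ)) ^ 2 := by
            apply Finset.sum_le_sum
            intro l _
            have h := hjmax' l
            nlinarith [abs_nonneg ((k l : ℝ)), sq_abs ((k l:ℝ)), sq_abs ((k j:ℝ))]
        _ = (d : ℝ) * ((k j : ℝ)) ^ 2 := by simp [Finset.sum_const, mul_comm]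
    calc N ≤ Real.sqrt ((d : ℝ) * ((k j : ℝ)) ^ 2) := Real.sqrt_le_sqrt hsum
      _ = Real.sqrt d * |((k j : ℝ))| := by
          rw [Real.sqrt_mul (le_of_lt hd0), Real.sqrt_sq_eq_abs]
  have hkj_big : 2 * C / W + 1 ≤ |((k j : ℝ))| := by
    have h1 : Real.sqrt d * (2 * C / W + 1) ≤ Real.sqrt d * |((k j : ℝ))| := by
      calc Real.sqrt d * (2 * C / W + 1) ≤ Real.sqrt d * (2 * C / W + 1) + 1 := by linarith
        _ ≤ N := hK
        _ ≤ Real.sqrt d * |((k j : ℝ))| := hNj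
    exact le_of_mul_le_mul_left h1 hsd
  have hkj1 : 1 ≤ |((k j : ℝ))| := by
    have : 0 ≤ 2 * C / W := by positivity
    linarith
  have hkjpos : 0 < |((k j : ℝ))| := by linarith
  -- the resonance sum
  set S : ℝ := ∑ i, ω i * ((k i : ℝ)) with hSdef
  have hS : |S| ≤ C / |((k j : ℝ))| := by
    have he1 : (1:ℝ) ≤ (d : ℝ) - 1 + τ := by linarith
    have hNe : N ≤ N ^ ((d : ℝ) - 1 + τ) := by
      calc N = N ^ (1:ℝ) := (Real.rpow_one N).symm
        _ ≤ N ^ ((d : ℝ) - 1 + τ) := Real.rpow_le_rpow_of_exponent_le hN1 he1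
    calc |S| ≤ C / N ^ ((d : ℝ) - 1 + τ) := hres
      _ ≤ C / N := div_le_div_of_nonneg_left (le_of_lt hC) hNpos hNe
      _ ≤ C / |((k j : ℝ))| := div_le_div_of_nonneg_left (le_of_lt hC) hkjpos hjN
  -- the auxiliary vector v
  set v : Fin d → ℝ := fun l => ω l * ((k j : ℝ)) - ω j * ((k l : ℝ)) with hvdef
  set Q : ℝ := Real.sqrt (∑ l, v l ^ 2) with hQdef
  have hQnonneg : 0 ≤ Q := Real.sqrt_nonneg _
  have hvω : ∑ l, v l * ω l = ((k j : ℝ)) * W ^ 2 - ω j * S := by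
    have h : ∀ l, v l * ω l = ((k j : ℝ)) * ω l ^ 2 - ω j * (ω l * ((k l : ℝ))) := by
      intro l; simp only [hvdef]; ring
    rw [Finset.sum_congr rfl (fun l _ => h l), Finset.sum_sub_distrib,
      ← Finset.mul_sum, ← Finset.mul_sum, hW2, hSdef]
  have hCS : |∑ l, v l * ω l| ≤ Q * W := by
    rw [← Real.sqrt_sq_eq_abs]
    calc Real.sqrt ((∑ l, v l * ω l) ^ 2)
        ≤ Real.sqrt ((∑ l, v l ^ 2) * ∑ l, ω l ^ 2) :=
          Real.sqrt_le_sqrt (Finset.sum_mul_sq_le_sq_mul_sq Finset.univ v ω)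
      _ = Q * W := Real.sqrt_mul (by positivity) _
  have hωjW : |ω j| ≤ W := habs ω j
  -- lower bound on Q
  have hQlow : |((k j : ℝ))| * W / 2 ≤ Q := by
    have h1 : |((k j : ℝ))| * W ^ 2 ≤ Q * W + W * (C / |((k j : ℝ))|) := by
      have h2 : |((k j : ℝ))| * W ^ 2 = |((k j : ℝ)) * W ^ 2| := by
        rw [abs_mul, abs_of_nonneg (by positivity : (0:ℝ) ≤ W ^ 2)]
      have h3 : |((k j : ℝ)) * W ^ 2| ≤ |∑ l, v l * ω l| + |ω j * S| := by
        rw [hvω]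
        calc |((k j : ℝ)) * W ^ 2| = |(((k j : ℝ)) * W ^ 2 - ω j * S) + ω j * S| := by ring_nf
          _ ≤ |((k j : ℝ)) * W ^ 2 - ω j * S| + |ω j * S| := abs_add_le _ _
      have h4 : |ω j * S| ≤ W * (C / |((k j : ℝ))|) := by
        rw [abs_mul]
        exact mul_le_mul hωjW hS (abs_nonneg S) (le_of_lt hWpos)
      linarith
    have h5 : C / |((k j : ℝ))| ≤ |((k j : ℝ))| * W / 2 := by
      rw [div_le_iff₀ hkjpos]
      have h6 : 2 * C ≤ |((k j : ℝ))| * W := by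
        have h7 : 2 * C / W ≤ |((k j : ℝ))| := by linarith
        calc 2 * C = (2 * C / W) * W := by field_simp
          _ ≤ |((k j : ℝ))| * W := mul_le_mul_of_nonneg_right h7 (le_of_lt hWpos)
      nlinarith
    have h6 : W * (C / |((k j : ℝ))|) ≤ W * (|((k j : ℝ))| * W / 2) :=
      mul_le_mul_of_nonneg_left h5 (le_of_lt hWpos)
    have e1 : W * (|((k j : ℝ))| * W / 2) = |((k j : ℝ))| * W ^ 2 / 2 := by ring
    have e2 : (|((k j : ℝ))| * W / 2) * W = |((k j : ℝ))| * W ^ 2 / 2 := by ring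
    have h9 : (|((k j : ℝ))| * W / 2) * W ≤ Q * W := by
      rw [e2]; rw [e1] at h6; linarith
    exact le_of_mul_le_mul_right h9 hWpos
  -- choose i maximizing |v l|
  obtain ⟨i, -, himax⟩ := Finset.exists_max_image Finset.univ
    (fun l => |v l|) ⟨j, Finset.mem_univ _⟩
  have himax' : ∀ l : Fin d, |v l| ≤ |v i| := fun l => himax l (Finset.mem_univ l)
  have hQi : Q ≤ Real.sqrt d * |v i| := by
    have hsum : ∑ l, v l ^ 2 ≤ (d : ℝ) * (v i) ^ 2 := by
      calc ∑ l, v l ^ 2 ≤ ∑ _l : Fin d, (v i) ^ 2 := by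
            apply Finset.sum_le_sum
            intro l _
            have h := himax' l
            nlinarith [sq_abs (v l), sq_abs (v i), abs_nonneg (v l)]
        _ = (d : ℝ) * (v i) ^ 2 := by simp [Finset.sum_const, mul_comm]
    calc Q ≤ Real.sqrt ((d : ℝ) * (v i) ^ 2) := Real.sqrt_le_sqrt hsum
      _ = Real.sqrt d * |v i| := by rw [Real.sqrt_mul (le_of_lt hd0), Real.sqrt_sq_eq_abs]
  have hdd : Real.sqrt d * Real.sqrt d = (d : ℝ) := Real.mul_self_sqrt (le_of_lt hd0)
  have hvi_low : W / (2 * d) * N ≤ |v i| := by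
    have a1 : N * W ≤ Real.sqrt d * |((k j : ℝ))| * W :=
      mul_le_mul_of_nonneg_right hNj (le_of_lt hWpos)
    have a2 : Real.sqrt d * (|((k j : ℝ))| * W / 2) ≤ Real.sqrt d * Q :=
      mul_le_mul_of_nonneg_left hQlow (le_of_lt hsd)
    have a3 : Real.sqrt d * Q ≤ Real.sqrt d * (Real.sqrt d * |v i|) :=
      mul_le_mul_of_nonneg_left hQi (le_of_lt hsd)
    have h1 : N * W / 2 ≤ (d : ℝ) * |v i| := by nlinarith
    rw [div_mul_eq_mul_div, div_le_iff₀ (by positivity : (0:ℝ) < 2 * d)]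
    nlinarith
  have hvi_pos : 0 < |v i| := by
    have : 0 < W / (2 * d) * N := by positivity
    linarith
  have hij : i ≠ j := by
    intro h
    rw [h] at hvi_pos
    simp [hvdef] at hvi_pos
  -- the companion vector
  set k' : Fin d → ℤ := fun l => if l = i then k j else if l = j then -(k i) else 0 with hk'def
  have hcast : ∀ l : Fin d,
      ((k' l : ℝ)) = (if l = i then ((k j : ℝ)) else if l = j then -((k i : ℝ)) else 0) := by
    intro l
    by_cases h1 : l = i
    · simp [hk'def, h1]
    · by_cases h2 : l = j <;> simp [hk'def, h1, h2]
  have hsum2 : ∑ l, ((k' l : ℝ)) ^ 2 = ((k j : ℝ)) ^ 2 + ((k i : ℝ)) ^ 2 := by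
    have h := sum_ite_two' (R := ℝ) hij (fun _ => 1) (((k j : ℝ)) ^ 2) (((k i : ℝ)) ^ 2)
    simp only [one_mul] at h
    rw [← h]
    apply Finset.sum_congr rfl
    intro l _
    rw [hcast l]
    by_cases h1 : l = i
    · simp [h1]
    · by_cases h2 : l = j <;> simp [h1, h2]
  have hsumω : ∑ l, ω l * ((k' l : ℝ)) = v i := by
    have h := sum_ite_two' (R := ℝ) hij ω ((k j : ℝ)) (-((k i : ℝ)))
    have hv : v i = ω i * ((k j : ℝ)) + ω j * (-((k i : ℝ))) := by
      simp only [hvdef]; ring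
    rw [hv, ← h]
    apply Finset.sum_congr rfl
    intro l _
    rw [hcast l]
  have hiN : |((k i : ℝ))| ≤ N := habs (fun l => (k l : ℝ)) i
  refine ⟨k', ?_, ?_, ?_, ?_, ?_⟩
  · -- orthogonality
    have h := sum_ite_two' (R := ℤ) hij k (k j) (-(k i))
    simp only [hk'def]
    rw [h]; ring
  · -- lower norm bound
    rw [hsum2]
    have h1 : |((k j : ℝ))| ≤ Real.sqrt (((k j : ℝ)) ^ 2 + ((k i : ℝ)) ^ 2) := by
      rw [← Real.sqrt_sq_eq_abs]
      exact Real.sqrt_le_sqrt (by nlinarith [sq_nonneg ((k i : ℝ))])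
    have h2 : (Real.sqrt d)⁻¹ * N ≤ |((k j : ℝ))| := by
      rw [inv_mul_eq_div, div_le_iff₀ hsd]
      linarith [mul_comm (Real.sqrt d) |((k j : ℝ))|, hNj]
    linarith
  · -- upper norm bound
    rw [hsum2]
    have h1 : ((k j : ℝ)) ^ 2 + ((k i : ℝ)) ^ 2 ≤ (2 * N) ^ 2 := by
      nlinarith [sq_abs ((k j : ℝ)), sq_abs ((k i : ℝ)), abs_nonneg ((k i:ℝ)),
        abs_nonneg ((k j:ℝ))]
    calc Real.sqrt (((k j : ℝ)) ^ 2 + ((k i : ℝ)) ^ 2) ≤ Real.sqrt ((2 * N) ^ 2) :=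
          Real.sqrt_le_sqrt h1
      _ = 2 * N := Real.sqrt_sq (by positivity)
  · -- lower inner product bound
    rw [hsumω]; exact hvi_low
  · -- upper inner product bound
    rw [hsumω]
    have hωi : |ω i| ≤ W := habs ω i
    calc |v i| ≤ |ω i| * |((k j : ℝ))| + |ω j| * |((k i : ℝ))| := by
          simp only [hvdef]
          calc |ω i * ((k j:ℝ)) - ω j * ((k i:ℝ))| ≤ |ω i * ((k j:ℝ))| + |ω j * ((k i:ℝ))| :=
                abs_sub _ _
            _ = |ω i| * |((k j : ℝ))| + |ω j| * |((k i : ℝ))| := by rw [abs_mul, abs_mul]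
      _ ≤ W * N + W * N := by
          have b1 := mul_le_mul hωi hjN (abs_nonneg _) (le_of_lt hWpos)
          have b2 := mul_le_mul hωjW hiN (abs_nonneg _) (le_of_lt hWpos)
          linarith
      _ = 2 * W * N := by ring
end

section
/- Let T be a trigonometric polynomial on ℝ of degree at most M. Then for every integer s ≥ 0, ‖T^{(s)}‖_∞ ≤ M^s ‖T‖_∞, where T^{(s)} denotes the s-th derivative and ‖·‖_∞ the supremum norm. -/
/-- `f` is a trigonometric polynomial of degree at most `M`. -/
def IsTrigPoly (M : ℕ) (f : ℝ → ℝ) : Prop :=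
  ∃ a b : ℕ → ℝ, f = fun x =>
    ∑ j ∈ Finset.range (M + 1), (a j * Real.cos (j * x) + b j * Real.sin (j * x))

open Finset Real

/-!
The case `s = 1` implies the general one, since the derivative of a trigonometric polynomial of
degree at most `M` is again one. For `s = 1` we use M. Riesz's interpolation formula: with the
nodes `θₖ = (2k + 1)π / (2M)` and the weights
`λₖ = sin (M θₖ) / (2M (1 - cos θₖ)) = (-1)ᵏ / (4M sin² (θₖ / 2))`, one has
`T' x = ∑_{k < 2M} λₖ T (x + θₖ)`. By linearity and the addition formulas it suffices that
`∑ λₖ cos (j θₖ) = 0` (the summands are odd under `θ ↦ 2π - θ`) and `∑ λₖ sin (j θₖ) = j` for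
`j ≤ M`. Since `sin (M θₖ) = ±1` has the sign of `λₖ`, the case `j = M` gives `∑ |λₖ| = M`, hence
`|T' x| ≤ M ‖T‖_∞`.
-/

theorem sum_range_cos_add_mul_eq_zero {n l : ℕ} (hl : ¬ n ∣ l) (α : ℝ) :
    ∑ k ∈ range n, cos (α + k * (2 * π * l / n)) = 0 := by
  rcases eq_or_ne n 0 with rfl | hn
  · simp
  have hζ := Complex.isPrimitiveRoot_exp n hn
  set z : ℂ := Complex.exp (2 * π * Complex.I / n) ^ l
  have hz : z ≠ 1 := by rwa [Ne, hζ.pow_eq_one_iff_dvd]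
  have hzn : z ^ n = 1 := by rw [pow_right_comm, hζ.pow_eq_one, one_pow]
  have hterm (k : ℕ) :
      cos (α + k * (2 * π * l / n)) = (Complex.exp (α * Complex.I) * z ^ k).re := by
    rw [← Complex.exp_ofReal_mul_I_re, ← pow_mul, ← Complex.exp_nat_mul, ← Complex.exp_add]
    congr 2
    push_cast
    ring
  simp only [hterm, ← Complex.re_sum, ← mul_sum, geom_sum_eq hz, hzn, sub_self, zero_div, mul_zero,
    Complex.zero_re]

noncomputable def dirichletKernel (m : ℕ) (θ : ℝ) : ℝ :=
  1 + 2 * ∑ l ∈ range m, cos ((l + 1 : ℕ) * θ)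

theorem one_sub_cos_mul_dirichletKernel (m : ℕ) (θ : ℝ) :
    (1 - cos θ) * dirichletKernel m θ = cos (m * θ) - cos ((m + 1 : ℕ) * θ) := by
  induction m with
  | zero => simp [dirichletKernel]
  | succ m ih =>
    have hprod : 2 * cos ((m + 1 : ℕ) * θ) * cos θ = cos (m * θ) + cos ((m + 2 : ℕ) * θ) := by
      rw [two_mul_cos_mul_cos]
      congr 2 <;> push_cast <;> ring
    simp only [dirichletKernel, sum_range_succ] at ih ⊢
    linear_combination ih - hprod

theorem two_mul_sin_mul_sin_eq_sum_dirichletKernel (n j : ℕ) (θ : ℝ) :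
    2 * sin ((n + j : ℕ) * θ) * sin (j * θ) =
      (1 - cos θ) * ∑ i ∈ range (2 * j), dirichletKernel (n + i) θ := by
  simp only [mul_sum, one_sub_cos_mul_dirichletKernel, Nat.add_assoc]
  rw [sum_range_sub' (fun i => cos ((n + i : ℕ) * θ)), cos_sub_cos]
  have hmid : ((n + 0 : ℕ) * θ + (n + 2 * j : ℕ) * θ) / 2 = (n + j : ℕ) * θ := by push_cast; ring
  have hhalf : ((n + 0 : ℕ) * θ - (n + 2 * j : ℕ) * θ) / 2 = -(j * θ) := by push_cast; ring
  rw [hmid, hhalf, sin_neg]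
  ring

theorem cos_ne_one_of_cos_nat_mul_eq_zero {n : ℕ} {θ : ℝ} (h : cos (n * θ) = 0) : cos θ ≠ 1 := by
  intro h1
  obtain ⟨m, rfl⟩ := (cos_eq_one_iff θ).1 h1
  have : cos (n * (m * (2 * π))) = 1 := by
    simpa [mul_assoc] using cos_int_mul_two_pi (n * m)
  exact one_ne_zero (this ▸ h)

noncomputable def rieszNode (M k : ℕ) : ℝ := (2 * k + 1) * π / (2 * M)

noncomputable def rieszCoeff (M k : ℕ) : ℝ :=
  sin (M * rieszNode M k) / (2 * M * (1 - cos (rieszNode M k)))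

section RieszNodes

variable {M : ℕ}

theorem cos_nat_mul_rieszNode (hM : M ≠ 0) (k : ℕ) : cos (M * rieszNode M k) = 0 :=
  cos_eq_zero_iff.2 ⟨k, by rw [rieszNode]; field_simp; push_cast; ring⟩

theorem sin_nat_mul_rieszNode_sq (hM : M ≠ 0) (k : ℕ) : sin (M * rieszNode M k) ^ 2 = 1 := by
  simpa [cos_nat_mul_rieszNode hM] using sin_sq_add_cos_sq (M * rieszNode M k)

theorem one_sub_cos_rieszNode_pos (hM : M ≠ 0) (k : ℕ) : 0 < 1 - cos (rieszNode M k) :=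
  sub_pos.2 <| (cos_le_one _).lt_of_ne <|
    cos_ne_one_of_cos_nat_mul_eq_zero (cos_nat_mul_rieszNode hM k)

theorem abs_rieszCoeff (hM : M ≠ 0) (k : ℕ) :
    |rieszCoeff M k| = rieszCoeff M k * sin (M * rieszNode M k) := by
  have hsq := sin_nat_mul_rieszNode_sq hM k
  have habs : |sin (M * rieszNode M k)| = 1 := by
    rw [← pow_eq_one_iff_of_nonneg (abs_nonneg _) two_ne_zero, sq_abs, hsq]
  have hden : 0 < 2 * (M : ℝ) * (1 - cos (rieszNode M k)) :=
    mul_pos (by positivity) (one_sub_cos_rieszNode_pos hM k)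
  rw [rieszCoeff, abs_div, abs_of_pos hden, habs, div_mul_eq_mul_div, ← sq, hsq]

theorem sum_cos_nat_mul_rieszNode {l : ℕ} (hl : ¬ 2 * M ∣ l) :
    ∑ k ∈ range (2 * M), cos (l * rieszNode M k) = 0 := by
  rw [← sum_range_cos_add_mul_eq_zero hl (l * π / (2 * M))]
  refine sum_congr rfl fun k _ => congrArg cos ?_
  rw [rieszNode]
  push_cast
  ring

theorem sum_dirichletKernel_rieszNode {m : ℕ} (hm : m < 2 * M) :
    ∑ k ∈ range (2 * M), dirichletKernel m (rieszNode M k) = 2 * M := by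
  simp only [dirichletKernel, sum_add_distrib, ← mul_sum]
  rw [sum_comm, sum_eq_zero fun l hl => sum_cos_nat_mul_rieszNode
    (Nat.not_dvd_of_pos_of_lt l.succ_pos (by have := mem_range.1 hl; omega))]
  simp

-- With `M = n + j`, `2 sin (M θ) sin (j θ) / (1 - cos θ)` telescopes into `2j` Dirichlet kernels,
-- each of which sums to `2M` over the nodes.
theorem sum_rieszCoeff_mul_sin (hM : M ≠ 0) {j : ℕ} (hj : j ≤ M) :
    ∑ k ∈ range (2 * M), rieszCoeff M k * sin (j * rieszNode M k) = j := by
  obtain ⟨n, rfl⟩ : ∃ n, M = n + j := ⟨M - j, by omega⟩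
  have hterm (k : ℕ) : rieszCoeff (n + j) k * sin (j * rieszNode (n + j) k) =
      (∑ i ∈ range (2 * j), dirichletKernel (n + i) (rieszNode (n + j) k)) / (4 * (n + j : ℕ)) := by
    have hden := one_sub_cos_rieszNode_pos hM k
    have hMpos : (0 : ℝ) < (n + j : ℕ) := by positivity
    rw [rieszCoeff, div_mul_eq_mul_div, div_eq_div_iff (by positivity) (by positivity)]
    linear_combination (2 * (n + j : ℕ) : ℝ) *
      two_mul_sin_mul_sin_eq_sum_dirichletKernel n j (rieszNode (n + j) k)
  rw [sum_congr rfl fun k _ => hterm k, ← sum_div, sum_comm,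
    sum_congr rfl fun i hi => sum_dirichletKernel_rieszNode (by have := mem_range.1 hi; omega)]
  rw [sum_const, card_range, nsmul_eq_mul]
  field_simp
  push_cast
  ring

theorem rieszNode_reflect (hM : M ≠ 0) {k : ℕ} (hk : k < 2 * M) :
    rieszNode M (2 * M - 1 - k) = 2 * π - rieszNode M k := by
  rw [rieszNode, rieszNode, Nat.sub_sub, Nat.cast_sub (by omega)]
  field_simp
  push_cast
  ring

theorem rieszCoeff_reflect (hM : M ≠ 0) {k : ℕ} (hk : k < 2 * M) :
    rieszCoeff M (2 * M - 1 - k) = -rieszCoeff M k := by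
  have hsin : sin (M * (2 * π - rieszNode M k)) = -sin (M * rieszNode M k) := by
    rw [mul_sub, sin_nat_mul_two_pi_sub]
  rw [rieszCoeff, rieszCoeff, rieszNode_reflect hM hk, cos_two_pi_sub, hsin, neg_div]

theorem sum_rieszCoeff_mul_cos (hM : M ≠ 0) (j : ℕ) :
    ∑ k ∈ range (2 * M), rieszCoeff M k * cos (j * rieszNode M k) = 0 := by
  have hreflect := sum_range_reflect (fun k => rieszCoeff M k * cos (j * rieszNode M k)) (2 * M)
  rw [sum_congr rfl fun k hk => by
    rw [rieszCoeff_reflect hM (mem_range.1 hk), rieszNode_reflect hM (mem_range.1 hk), mul_sub,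
      cos_nat_mul_two_pi_sub, neg_mul], sum_neg_distrib] at hreflect
  linarith

theorem sum_abs_rieszCoeff (hM : M ≠ 0) : ∑ k ∈ range (2 * M), |rieszCoeff M k| = M := by
  simp only [abs_rieszCoeff hM]
  exact sum_rieszCoeff_mul_sin hM le_rfl

theorem sum_rieszCoeff_mul_cos_add (hM : M ≠ 0) {j : ℕ} (hj : j ≤ M) (x : ℝ) :
    ∑ k ∈ range (2 * M), rieszCoeff M k * cos (j * (x + rieszNode M k)) = -(j * sin (j * x)) := by
  simp only [mul_add, cos_add, mul_sub, sum_sub_distrib, mul_left_comm _ (cos (j * x)),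
    mul_left_comm _ (sin (j * x)), ← mul_sum, sum_rieszCoeff_mul_cos hM,
    sum_rieszCoeff_mul_sin hM hj]
  ring

theorem sum_rieszCoeff_mul_sin_add (hM : M ≠ 0) {j : ℕ} (hj : j ≤ M) (x : ℝ) :
    ∑ k ∈ range (2 * M), rieszCoeff M k * sin (j * (x + rieszNode M k)) = j * cos (j * x) := by
  simp only [mul_add, sin_add, sum_add_distrib, mul_left_comm _ (cos (j * x)),
    mul_left_comm _ (sin (j * x)), ← mul_sum, sum_rieszCoeff_mul_cos hM,
    sum_rieszCoeff_mul_sin hM hj]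
  ring

end RieszNodes

noncomputable def trigPoly (M : ℕ) (a b : ℕ → ℝ) (x : ℝ) : ℝ :=
  ∑ j ∈ range (M + 1), (a j * cos (j * x) + b j * sin (j * x))

theorem hasDerivAt_trigPoly (M : ℕ) (a b : ℕ → ℝ) (x : ℝ) :
    HasDerivAt (trigPoly M a b) (trigPoly M (fun j => j * b j) (fun j => -(j * a j)) x) x := by
  unfold trigPoly
  refine HasDerivAt.fun_sum fun j _ => ?_
  have hlin : HasDerivAt (fun y : ℝ => (j : ℝ) * y) j x := by
    simpa using (hasDerivAt_id x).const_mul (j : ℝ)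
  convert (hlin.cos.const_mul (a j)).fun_add (hlin.sin.const_mul (b j)) using 1
  ring

namespace IsTrigPoly

variable {M : ℕ} {T : ℝ → ℝ}

theorem deriv (hT : IsTrigPoly M T) : IsTrigPoly M (deriv T) := by
  obtain ⟨a, b, rfl⟩ : ∃ a b, T = trigPoly M a b := hT
  exact ⟨fun j => j * b j, fun j => -(j * a j), funext fun x => (hasDerivAt_trigPoly M a b x).deriv⟩

theorem bddAbove_abs (hT : IsTrigPoly M T) : BddAbove (Set.range fun y => |T y|) := by
  obtain ⟨a, b, rfl⟩ : ∃ a b, T = trigPoly M a b := hT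
  refine ⟨∑ j ∈ range (M + 1), (|a j| + |b j|), Set.forall_mem_range.2 fun y => ?_⟩
  refine (abs_sum_le_sum_abs _ _).trans (sum_le_sum fun j _ => (abs_add_le _ _).trans ?_)
  simp only [abs_mul]
  gcongr
  · exact mul_le_of_le_one_right (abs_nonneg _) (abs_cos_le_one _)
  · exact mul_le_of_le_one_right (abs_nonneg _) (abs_sin_le_one _)

theorem deriv_eq_sum_rieszCoeff_mul (hT : IsTrigPoly M T) (hM : M ≠ 0) (x : ℝ) :
    _root_.deriv T x = ∑ k ∈ range (2 * M), rieszCoeff M k * T (x + rieszNode M k) := by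
  obtain ⟨a, b, rfl⟩ : ∃ a b, T = trigPoly M a b := hT
  rw [(hasDerivAt_trigPoly M a b x).deriv]
  simp only [trigPoly, mul_sum, mul_add (rieszCoeff M _), mul_left_comm _ (a _),
    mul_left_comm _ (b _)]
  rw [sum_comm]
  refine sum_congr rfl fun j hj => ?_
  have hjM : j ≤ M := Nat.lt_succ_iff.1 (mem_range.1 hj)
  rw [sum_add_distrib, ← mul_sum, ← mul_sum, sum_rieszCoeff_mul_cos_add hM hjM,
    sum_rieszCoeff_mul_sin_add hM hjM]
  ring

theorem abs_deriv_le (hT : IsTrigPoly M T) (x : ℝ) :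
    |_root_.deriv T x| ≤ M * ⨆ y, |T y| := by
  rcases eq_or_ne M 0 with rfl | hM
  · obtain ⟨a, b, rfl⟩ : ∃ a b, T = trigPoly 0 a b := hT
    rw [(hasDerivAt_trigPoly 0 a b x).deriv]
    simp [trigPoly]
  calc |_root_.deriv T x|
      ≤ ∑ k ∈ range (2 * M), |rieszCoeff M k| * |T (x + rieszNode M k)| := by
        rw [hT.deriv_eq_sum_rieszCoeff_mul hM]
        simp only [← abs_mul]
        exact abs_sum_le_sum_abs _ _
    _ ≤ ∑ k ∈ range (2 * M), |rieszCoeff M k| * ⨆ y, |T y| := by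
        gcongr with k
        exact le_ciSup hT.bddAbove_abs _
    _ = M * ⨆ y, |T y| := by rw [← sum_mul, sum_abs_rieszCoeff hM]

end IsTrigPoly

/-- Bernstein's inequality: `‖T^{(s)}‖_∞ ≤ M^s ‖T‖_∞` for a trigonometric polynomial of
degree at most `M`. -/
theorem bernstein_inequality (M s : ℕ) (T : ℝ → ℝ) (hT : IsTrigPoly M T) :
    ∀ x : ℝ, |iteratedDeriv s T x| ≤ (M : ℝ) ^ s * ⨆ y : ℝ, |T y| := by
  induction s generalizing T with
  | zero => exact fun x => by simpa using le_ciSup hT.bddAbove_abs x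
  | succ s ih =>
    intro x
    calc |iteratedDeriv (s + 1) T x|
        = |iteratedDeriv s (deriv T) x| := by rw [iteratedDeriv_succ']
      _ ≤ (M : ℝ) ^ s * ⨆ y, |deriv T y| := ih _ hT.deriv x
      _ ≤ (M : ℝ) ^ s * (M * ⨆ y, |T y|) := by gcongr; exact ciSup_le hT.abs_deriv_le
      _ = (M : ℝ) ^ (s + 1) * ⨆ y, |T y| := by ring
end
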